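/- For c > 1 and λ₀ ∈ ((1-√c)², (1+√c)²), define v± = (λ₀-c+1)/(2λ₀) ± iπρ(λ₀), φ₀ ∈ (0,π) by v± = λ₀^{-1/2}e^{±iφ₀}, and c± = (1/v±² - c/(1-v±)²)·λ₀^{-1}·e^{±2iφ₀}. Then c₊·c₋ = 4π²λ₀²ρ(λ₀)²/c. -/

import Mathlib

open Real

/-- The product of the Gaussian curvatures `c±` at the two saddle points equals
`4π²λ₀²ρ(λ₀)²/c`. -/
theorem saddle_curvature_product (c l₀ φ₀ : ℝ) (hc : 1 < c)
    (hl : l₀ ∈ Set.Ioo ((1 - Real.sqrt c) ^ 2) ((1 + Real.sqrt c) ^ 2))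
    (ρ : ℝ)
    (hρ : ρ = (1 / (2 * π * l₀)) *
        Real.sqrt (((1 + Real.sqrt c) ^ 2 - l₀) * (l₀ - (1 - Real.sqrt c) ^ 2)))
    (vp vm : ℂ)
    (hvp : vp = (((l₀ - c + 1) / (2 * l₀) : ℝ) : ℂ) + ((π * ρ : ℝ) : ℂ) * Complex.I)
    (hvm : vm = (((l₀ - c + 1) / (2 * l₀) : ℝ) : ℂ) - ((π * ρ : ℝ) : ℂ) * Complex.I)
    (hφ₀ : φ₀ ∈ Set.Ioo 0 π)
    (hep : vp = ((Real.sqrt l₀)⁻¹ : ℝ) * Complex.exp (Complex.I * (φ₀ : ℝ)))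
    (hem : vm = ((Real.sqrt l₀)⁻¹ : ℝ) * Complex.exp (-(Complex.I * (φ₀ : ℝ)))) :
    ((1 / vp ^ 2 - (c : ℂ) / (1 - vp) ^ 2) * ((l₀ : ℂ))⁻¹ *
          Complex.exp (2 * Complex.I * (φ₀ : ℝ))) *
        ((1 / vm ^ 2 - (c : ℂ) / (1 - vm) ^ 2) * ((l₀ : ℂ))⁻¹ *
          Complex.exp (-(2 * Complex.I * (φ₀ : ℝ)))) =
      ((4 * π ^ 2 * l₀ ^ 2 * ρ ^ 2 / c : ℝ) : ℂ) := by
  have hc0 : (0:ℝ) < c := lt_trans one_pos hc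
  have hl0 : (0:ℝ) < l₀ := lt_of_le_of_lt (sq_nonneg _) hl.1
  have hs0 : Real.sqrt l₀ ≠ 0 := (Real.sqrt_pos.mpr hl0).ne'
  have hs0c : ((Real.sqrt l₀ : ℝ) : ℂ) ≠ 0 := by exact_mod_cast hs0
  have hl0c : ((l₀ : ℝ) : ℂ) ≠ 0 := by exact_mod_cast hl0.ne'
  have hcc : ((c : ℝ) : ℂ) ≠ 0 := by exact_mod_cast hc0.ne'
  have hsq : (((Real.sqrt l₀ : ℝ)) : ℂ) ^ 2 = (l₀ : ℂ) := by
    norm_cast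
    exact Real.sq_sqrt hl0.le
  -- exp(Iφ) = √l₀ * vp  and exp(−Iφ) = √l₀ * vm
  have hepe : Complex.exp (Complex.I * (φ₀ : ℝ)) = ((Real.sqrt l₀ : ℝ) : ℂ) * vp := by
    rw [hep]
    push_cast
    field_simp
  have heme : Complex.exp (-(Complex.I * (φ₀ : ℝ))) = ((Real.sqrt l₀ : ℝ) : ℂ) * vm := by
    rw [hem]
    push_cast
    field_simp
  -- exp(2Iφ) = l₀ vp², exp(−2Iφ) = l₀ vm²
  have e2p : Complex.exp (2 * Complex.I * (φ₀ : ℝ)) = (l₀ : ℂ) * vp ^ 2 := by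
    have h2 : (2 * Complex.I * (φ₀ : ℝ)) = ((2:ℕ) : ℂ) * (Complex.I * (φ₀ : ℝ)) := by
      push_cast; ring
    rw [h2, Complex.exp_nat_mul, hepe, mul_pow, hsq]
  have e2m : Complex.exp (-(2 * Complex.I * (φ₀ : ℝ))) = (l₀ : ℂ) * vm ^ 2 := by
    have h2 : (-(2 * Complex.I * (φ₀ : ℝ))) = ((2:ℕ) : ℂ) * (-(Complex.I * (φ₀ : ℝ))) := by
      push_cast; ring
    rw [h2, Complex.exp_nat_mul, heme, mul_pow, hsq]
  -- vp * vm * l₀ = 1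
  have hP : vp * vm * (l₀ : ℂ) = 1 := by
    rw [hep, hem]
    have h1 : Complex.exp (Complex.I * (φ₀ : ℝ)) * Complex.exp (-(Complex.I * (φ₀ : ℝ))) = 1 := by
      rw [← Complex.exp_add, add_neg_cancel, Complex.exp_zero]
    push_cast
    calc ((Real.sqrt l₀ : ℝ) : ℂ)⁻¹ * Complex.exp (Complex.I * (φ₀ : ℝ)) *
          (((Real.sqrt l₀ : ℝ) : ℂ)⁻¹ * Complex.exp (-(Complex.I * (φ₀ : ℝ)))) * (l₀ : ℂ)
        = (Complex.exp (Complex.I * (φ₀ : ℝ)) * Complex.exp (-(Complex.I * (φ₀ : ℝ)))) *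
            ((((Real.sqrt l₀ : ℝ) : ℂ))⁻¹ * (((Real.sqrt l₀ : ℝ) : ℂ))⁻¹ * (l₀ : ℂ)) := by ring
      _ = 1 := by
          rw [h1, one_mul, ← hsq]
          field_simp
  -- (vp + vm) * l₀ = l₀ - c + 1
  have hS : (vp + vm) * (l₀ : ℂ) = (l₀ : ℂ) - c + 1 := by
    rw [hvp, hvm]
    push_cast
    field_simp
    ring
  -- (1 - vp)(1 - vm) l₀ = c
  have hQ : (1 - vp) * (1 - vm) * (l₀ : ℂ) = (c : ℂ) := by
    linear_combination hP - hS
  -- (vp - vm)² = -4 (πρ)²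
  have hD : (vp - vm) ^ 2 = -4 * ((π : ℂ) * ρ) ^ 2 := by
    rw [hvp, hvm]
    push_cast
    linear_combination (4 : ℂ) * ((π : ℂ) * ρ) ^ 2 * Complex.I_sq
  -- 4 l₀² (πρ)² = 4 l₀ - (l₀ - c + 1)²
  have hB : 4 * (l₀ : ℂ) ^ 2 * ((π : ℂ) * ρ) ^ 2 = 4 * (l₀ : ℂ) - ((l₀ : ℂ) - c + 1) ^ 2 := by
    linear_combination ((l₀ : ℂ) ^ 2) * hD -
      ((vp + vm) * (l₀ : ℂ) + ((l₀ : ℂ) - c + 1)) * hS + 4 * (l₀ : ℂ) * hP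
  -- nonvanishing
  have hvp0 : vp ≠ 0 := by
    intro h; rw [h] at hP; simp at hP
  have hvm0 : vm ≠ 0 := by
    intro h; rw [h] at hP; simp at hP
  have h1vp : (1 : ℂ) - vp ≠ 0 := by
    intro h; rw [h] at hQ; simp at hQ; exact hcc hQ.symm
  have h1vm : (1 : ℂ) - vm ≠ 0 := by
    intro h; rw [h] at hQ; simp at hQ; exact hcc hQ.symm
  -- the key curvature-product identity
  have key : ((1 - vp) ^ 2 - (c : ℂ) * vp ^ 2) * ((1 - vm) ^ 2 - (c : ℂ) * vm ^ 2) * (l₀ : ℂ) ^ 2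
      = 4 * (c : ℂ) * ((π : ℂ) * ρ) ^ 2 * (l₀ : ℂ) ^ 2 := by
    linear_combination ((1 - vp) * (1 - vm) * (l₀ : ℂ) + (c : ℂ)) * hQ -
      ((c : ℂ) / 2) * ((vp + vm) * (l₀ : ℂ) - 2 * (vp * vm * (l₀ : ℂ)) + ((l₀ : ℂ) - c - 1)) * hS +
      (c : ℂ) * ((vp + vm) * (l₀ : ℂ) - 2 * (vp * vm * (l₀ : ℂ)) + ((l₀ : ℂ) - c - 1)) * hP -
      ((c : ℂ) / 2) * (l₀ : ℂ) ^ 2 * hD +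
      (c : ℂ) ^ 2 * (vp * vm * (l₀ : ℂ) + 1) * hP -
      ((c : ℂ) / 2) * hB
  -- rewrite the two factors
  have h1 : (1 / vp ^ 2 - (c : ℂ) / (1 - vp) ^ 2) * ((l₀ : ℂ))⁻¹ * ((l₀ : ℂ) * vp ^ 2)
      = ((1 - vp) ^ 2 - (c : ℂ) * vp ^ 2) / (1 - vp) ^ 2 := by
    field_simp
  have h2 : (1 / vm ^ 2 - (c : ℂ) / (1 - vm) ^ 2) * ((l₀ : ℂ))⁻¹ * ((l₀ : ℂ) * vm ^ 2)
      = ((1 - vm) ^ 2 - (c : ℂ) * vm ^ 2) / (1 - vm) ^ 2 := by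
    field_simp
  rw [e2p, e2m, h1, h2, div_mul_div_comm]
  rw [div_eq_iff (mul_ne_zero (pow_ne_zero 2 h1vp) (pow_ne_zero 2 h1vm))]
  push_cast
  rw [div_mul_eq_mul_div, eq_div_iff hcc]
  apply mul_left_cancel₀ (pow_ne_zero 2 hl0c)
  linear_combination (c : ℂ) * key -
    4 * ((π : ℂ) * ρ) ^ 2 * (l₀ : ℂ) ^ 2 * ((1 - vp) * (1 - vm) * (l₀ : ℂ) + (c : ℂ)) * hQ
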